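/- arXiv:1807.05742 — 2 statements merged into one kernel-verified Lean document; each statement's English description precedes it below -/
import Mathlib

section
/- For any even integer N ≥ 2, the sum over all 2-divisible partitions A of {1,…,N} (partitions all of whose blocks have even cardinality) of the quantity (−1)^{k(A)+1} · ∏_{B a block of A} (|B| − 1)!, where k(A) is the number of blocks of A, equals (N−1)!!·(N−3)!!. -/
/-!
Deleting the block that contains a fixed element `a ∈ s` shows that the signed weighted partition
sum `f(s) = ∑_P (-1)^(|P|+1) ∏_{B ∈ P} w(|B|)` satisfies `f(s) = -∑_{a ∈ B ⊆ s} w(|B|) f(s \ B)`,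
so `f(s) = G(|s|)` for the sequence with `G(0) = -1` and
`G(n+1) = -∑_m (n choose m) w(m+1) G(n-m)`, i.e. `∑ G(n) xⁿ/n! = -exp(-∑_j w(j) xʲ/j!)`.
Restricting to even blocks means `w(j) = (j-1)!` for even `j` and `0` otherwise, so the series is
`-exp(½ log(1 - x²)) = -√(1 - x²)`, whose coefficients satisfy `G(n+2) = (n+1)(n-1) G(n)`, giving
`G(2m) = (2m-1)‼ (2m-3)‼` for `m ≥ 1`. The two recurrences are matched by a direct induction on
`n`, without power series.
-/

open scoped BigOperators

/-- `P` is a partition of `{1,…,N}` presented as a finite set of pairwise disjoint nonempty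
blocks whose union is everything. -/
abbrev IsFinsetPartition {N : ℕ} (P : Finset (Finset (Fin N))) : Prop :=
  (∀ B ∈ P, B.Nonempty) ∧
  (∀ B ∈ P, ∀ C ∈ P, B ≠ C → Disjoint B C) ∧
  (∀ x : Fin N, ∃ B ∈ P, x ∈ B)

open Finset
open scoped Nat

lemma Finset.sum_powerset_filter_mem_apply_card {β M : Type*} [DecidableEq β] [AddCommMonoid M]
    {s : Finset β} {a : β} (ha : a ∈ s) (f : ℕ → M) :
    ∑ B ∈ s.powerset with a ∈ B, f #B = ∑ m ∈ range #s, (#s - 1).choose m • f (m + 1) := by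
  calc ∑ B ∈ s.powerset with a ∈ B, f #B
      = ∑ C ∈ (s.erase a).powerset, f (#C + 1) := by
        refine sum_nbij' (·.erase a) (insert a) ?_ ?_ ?_ ?_ ?_ <;>
          simp only [mem_filter, mem_powerset]
        · exact fun B ⟨hBs, _⟩ => erase_subset_erase a hBs
        · exact fun C hC => ⟨insert_subset ha ((hC.trans (erase_subset a s))), mem_insert_self a C⟩
        · exact fun B ⟨_, haB⟩ => insert_erase haB
        · exact fun C hC => erase_insert fun haC => notMem_erase a s (hC haC)
        · exact fun B ⟨_, haB⟩ => by rw [card_erase_add_one haB]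
    _ = _ := by
        rw [sum_powerset_apply_card (fun j => f (j + 1)), card_erase_of_mem ha,
          Nat.sub_add_cancel (card_pos.2 ⟨a, ha⟩)]

section Partitions

variable {α : Type*} [DecidableEq α]

abbrev IsPartitionOf (s : Finset α) (P : Finset (Finset α)) : Prop :=
  (∀ B ∈ P, B.Nonempty) ∧ (∀ B ∈ P, ∀ C ∈ P, B ≠ C → Disjoint B C) ∧ P.biUnion id = s

namespace IsPartitionOf

variable {s B C : Finset α} {P Q : Finset (Finset α)} {a : α}

lemma subset (hP : IsPartitionOf s P) (hB : B ∈ P) : B ⊆ s :=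
  hP.2.2 ▸ subset_biUnion_of_mem id hB

lemma eq_of_mem_of_mem (hP : IsPartitionOf s P) (hB : B ∈ P) (hC : C ∈ P) (haB : a ∈ B)
    (haC : a ∈ C) : B = C :=
  by_contra fun hne => disjoint_left.1 (hP.2.1 B hB C hC hne) haB haC

lemma card_filter_mem (hP : IsPartitionOf s P) (ha : a ∈ s) : #{B ∈ P | a ∈ B} = 1 := by
  obtain ⟨B, hB, haB⟩ := mem_biUnion.1 (hP.2.2 ▸ ha : a ∈ P.biUnion id)
  refine card_eq_one.2 ⟨B, ext fun C => ?_⟩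
  simp only [mem_filter, mem_singleton]
  exact ⟨fun ⟨hC, haC⟩ => hP.eq_of_mem_of_mem hC hB haC haB, by rintro rfl; exact ⟨hB, haB⟩⟩

lemma erase (hP : IsPartitionOf s P) (hB : B ∈ P) : IsPartitionOf (s \ B) (P.erase B) := by
  obtain ⟨hne, hdisj, hcover⟩ := hP
  refine ⟨fun C hC => hne C (mem_of_mem_erase hC),
    fun C hC D hD => hdisj C (mem_of_mem_erase hC) D (mem_of_mem_erase hD), ?_⟩
  conv_rhs => rw [← hcover, ← insert_erase hB]
  rw [biUnion_insert, id, union_sdiff_left, sdiff_eq_self_of_disjoint]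
  exact (disjoint_biUnion_left _ _ _).2 fun C hC =>
    hdisj C (mem_of_mem_erase hC) B hB (ne_of_mem_erase hC)

lemma insert (hQ : IsPartitionOf (s \ B) Q) (hBs : B ⊆ s) (hB : B.Nonempty) :
    IsPartitionOf s (insert B Q) := by
  obtain ⟨hne, hdisj, hcover⟩ := hQ
  have hBQ : ∀ C ∈ Q, Disjoint B C := fun C hC =>
    disjoint_of_subset_right (hcover ▸ subset_biUnion_of_mem id hC) disjoint_sdiff
  refine ⟨forall_mem_insert _ _ _ |>.2 ⟨hB, hne⟩, ?_, ?_⟩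
  · simp only [mem_insert]
    rintro C (rfl | hC) D (rfl | hD) hCD
    exacts [absurd rfl hCD, hBQ D hD, (hBQ C hC).symm, hdisj C hC D hD hCD]
  · rw [biUnion_insert, hcover, id, union_sdiff_of_subset hBs]

lemma notMem_of_sdiff (hQ : IsPartitionOf (s \ B) Q) (hB : B.Nonempty) : B ∉ Q := by
  obtain ⟨a, ha⟩ := hB
  exact fun hBQ => (mem_sdiff.1 (hQ.subset hBQ ha)).2 ha

lemma empty_iff : IsPartitionOf ∅ P ↔ P = ∅ := by
  refine ⟨fun hP => eq_empty_of_forall_notMem fun B hB => ?_,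
    by rintro rfl; exact ⟨by simp, by simp, by simp⟩⟩
  obtain ⟨a, ha⟩ := hP.1 B hB
  exact notMem_empty a (hP.subset hB ha)

end IsPartitionOf

variable {R : Type*} [CommRing R] (w : ℕ → R)

def partitionWeight (P : Finset (Finset α)) : R := (-1) ^ (#P + 1) * ∏ B ∈ P, w #B

lemma partitionWeight_insert {B : Finset α} {P : Finset (Finset α)} (hB : B ∉ P) :
    partitionWeight w (insert B P) = -(w #B * partitionWeight w P) := by
  rw [partitionWeight, partitionWeight, card_insert_of_notMem hB, prod_insert hB]
  ring

variable [Fintype α]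

def partitionSum (s : Finset α) : R := ∑ P with IsPartitionOf s P, partitionWeight w P

lemma partitionSum_empty : partitionSum w (∅ : Finset α) = -1 := by
  simp [partitionSum, IsPartitionOf.empty_iff, filter_eq', partitionWeight]

lemma sum_partitionWeight_of_mem {s B : Finset α} (hBs : B ⊆ s) (hB : B.Nonempty) :
    ∑ P with IsPartitionOf s P ∧ B ∈ P, partitionWeight w P =
      -(w #B * partitionSum w (s \ B)) := by
  rw [partitionSum, mul_sum, ← sum_neg_distrib]
  refine sum_nbij' (·.erase B) (insert B) ?_ ?_ ?_ ?_ ?_ <;>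
    simp only [mem_filter, mem_univ, true_and]
  · exact fun P ⟨hP, hBP⟩ => hP.erase hBP
  · exact fun Q hQ => ⟨hQ.insert hBs hB, mem_insert_self B Q⟩
  · exact fun P ⟨_, hBP⟩ => insert_erase hBP
  · exact fun Q hQ => erase_insert (hQ.notMem_of_sdiff hB)
  · intro P ⟨_, hBP⟩
    rw [← partitionWeight_insert w (notMem_erase B P), insert_erase hBP]

lemma partitionSum_eq_neg_sum_block {s : Finset α} {a : α} (ha : a ∈ s) :
    partitionSum w s = -∑ B ∈ s.powerset with a ∈ B, w #B * partitionSum w (s \ B) := by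
  calc partitionSum w s
      = ∑ P with IsPartitionOf s P, ∑ B ∈ P with a ∈ B, partitionWeight w P := by
        refine sum_congr rfl fun P hP => ?_
        rw [sum_const, (mem_filter.1 hP).2.card_filter_mem ha, one_smul]
    _ = ∑ B ∈ s.powerset with a ∈ B, ∑ P with IsPartitionOf s P ∧ B ∈ P, partitionWeight w P :=
        sum_comm' fun P B => by
          simp only [mem_filter, mem_univ, true_and, mem_powerset]
          exact ⟨fun ⟨hP, hBP, haB⟩ => ⟨⟨hP, hBP⟩, hP.subset hBP, haB⟩,
            fun ⟨⟨hP, hBP⟩, _, haB⟩ => ⟨hP, hBP, haB⟩⟩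
    _ = _ := by
        rw [← sum_neg_distrib]
        refine sum_congr rfl fun B hB => ?_
        rw [mem_filter, mem_powerset] at hB
        exact sum_partitionWeight_of_mem w hB.1 ⟨a, hB.2⟩

theorem partitionSum_eq_of_recurrence (G : ℕ → R) (h0 : G 0 = -1)
    (hsucc : ∀ n, G (n + 1) = -∑ m ∈ range (n + 1), (n.choose m : R) * w (m + 1) * G (n - m))
    (s : Finset α) : partitionSum w s = G #s := by
  induction s using Finset.strongInduction with
  | H s ih =>
  rcases s.eq_empty_or_nonempty with rfl | ⟨a, ha⟩
  · rw [partitionSum_empty, card_empty, h0]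
  obtain ⟨n, hn⟩ : ∃ n, #s = n + 1 := Nat.exists_eq_succ_of_ne_zero (card_ne_zero_of_mem ha)
  have hblock : ∀ B ∈ {B ∈ s.powerset | a ∈ B},
      w #B * partitionSum w (s \ B) = w #B * G (#s - #B) := by
    intro B hB
    rw [mem_filter, mem_powerset] at hB
    rw [ih _ (sdiff_ssubset hB.1 ⟨a, hB.2⟩), card_sdiff_of_subset hB.1]
  rw [partitionSum_eq_neg_sum_block w ha, sum_congr rfl hblock,
    sum_powerset_filter_mem_apply_card ha (fun j => w j * G (#s - j)), hn, hsucc]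
  simp only [nsmul_eq_mul, Nat.add_sub_cancel, Nat.add_sub_add_right, mul_assoc]

def evenBlockWeight (j : ℕ) : ℤ := if Even j then ((j - 1)! : ℤ) else 0

theorem sum_evenPartitions_eq_partitionSum (s : Finset α) :
    ∑ P with IsPartitionOf s P ∧ ∀ B ∈ P, Even #B, (-1 : ℤ) ^ (#P + 1) * ∏ B ∈ P, ((#B - 1)! : ℤ) =
      partitionSum evenBlockWeight s := by
  rw [partitionSum, ← filter_filter, sum_filter]
  refine sum_congr rfl fun P _ => ?_
  split_ifs with hP
  · exact congrArg _ (prod_congr rfl fun B hB => (if_pos (hP B hB)).symm)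
  · obtain ⟨B, hB, hodd⟩ := not_forall₂.1 hP
    rw [partitionWeight, prod_eq_zero hB (if_neg hodd), mul_zero]

end Partitions

theorem isFinsetPartition_iff {N : ℕ} (P : Finset (Finset (Fin N))) :
    IsFinsetPartition P ↔ IsPartitionOf univ P := by
  simp [eq_univ_iff_forall]

/-- `n !` times the coefficient of `x ^ n` in `-√(1 - x²)`. -/
def negSqrtCoeff : ℕ → ℤ
  | 0 => -1
  | 1 => 0
  | n + 2 => (n + 1) * (n - 1) * negSqrtCoeff n

theorem negSqrtCoeff_succ : ∀ n, negSqrtCoeff (n + 1) =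
    -∑ m ∈ range (n + 1), (n.choose m : ℤ) * evenBlockWeight (m + 1) * negSqrtCoeff (n - m)
  | 0 => by simp [negSqrtCoeff, evenBlockWeight]
  | 1 => by simp [negSqrtCoeff, evenBlockWeight, sum_range_succ]
  | n + 2 => by
    have hterm : ∀ m ∈ range (n + 1),
        ((n + 2).choose (m + 1 + 1) : ℤ) * evenBlockWeight (m + 1 + 1 + 1) *
            negSqrtCoeff (n + 2 - (m + 1 + 1)) =
          (n + 2) * (n + 1) *
            ((n.choose m : ℤ) * evenBlockWeight (m + 1) * negSqrtCoeff (n - m)) := by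
      intro m _
      have hw : evenBlockWeight (m + 1 + 1 + 1) = (m + 2) * (m + 1) * evenBlockWeight (m + 1) := by
        simp only [evenBlockWeight, Nat.even_add_one, not_not, Nat.add_sub_cancel,
          Nat.factorial_succ]
        split_ifs <;> push_cast <;> ring
      have h1 : ((n + 1 : ℕ) * n.choose m : ℤ) = (n + 1).choose (m + 1) * (m + 1 : ℕ) := by
        exact_mod_cast Nat.add_one_mul_choose_eq n m
      have h2 :
          ((n + 2 : ℕ) * (n + 1).choose (m + 1) : ℤ) = (n + 2).choose (m + 2) * (m + 2 : ℕ) := by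
        exact_mod_cast Nat.add_one_mul_choose_eq (n + 1) (m + 1)
      push_cast at h1 h2
      rw [hw, Nat.add_sub_add_right]
      linear_combination (evenBlockWeight (m + 1) * negSqrtCoeff (n - m)) *
        (-(m + 1 : ℤ) * h2 - (n + 2) * h1)
    have hfirst :
        ((n + 2).choose 0 : ℤ) * evenBlockWeight (0 + 1) * negSqrtCoeff (n + 2 - 0) = 0 := by
      simp [evenBlockWeight]
    have hsecond : ((n + 2).choose (0 + 1) : ℤ) * evenBlockWeight (0 + 1 + 1) *
        negSqrtCoeff (n + 2 - (0 + 1)) = (n + 2) * negSqrtCoeff (n + 1) := by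
      simp [evenBlockWeight]
    rw [sum_range_succ', sum_range_succ', sum_congr rfl hterm, ← mul_sum,
      neg_eq_iff_eq_neg.mp (negSqrtCoeff_succ n).symm, hfirst, hsecond,
      show n + 2 + 1 = n + 1 + 2 from rfl, negSqrtCoeff]
    push_cast
    ring

theorem negSqrtCoeff_two_mul_add_two (k : ℕ) :
    negSqrtCoeff (2 * k + 2) = ((2 * k + 1)‼ * (2 * k - 1)‼ : ℕ) := by
  induction k with
  | zero => rfl
  | succ k ih =>
    rw [show 2 * (k + 1) + 2 = 2 * k + 2 + 2 by ring, negSqrtCoeff, ih,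
      show 2 * (k + 1) + 1 = 2 * k + 1 + 2 by ring, Nat.doubleFactorial_add_two,
      show 2 * (k + 1) - 1 = 2 * k + 1 by omega, Nat.doubleFactorial_add_one]
    push_cast
    ring

theorem negSqrtCoeff_of_even {n : ℕ} (hn : Even n) (h2 : 2 ≤ n) :
    negSqrtCoeff n = ((n - 1)‼ * (n - 3)‼ : ℕ) := by
  obtain ⟨k, rfl⟩ : ∃ k, n = 2 * k + 2 := by
    obtain ⟨r, hr⟩ := hn
    exact ⟨r - 1, by omega⟩
  rw [negSqrtCoeff_two_mul_add_two, show 2 * k + 2 - 1 = 2 * k + 1 by omega,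
    show 2 * k + 2 - 3 = 2 * k - 1 by omega]

/-- For any even `N ≥ 2`, the sum over all 2-divisible partitions `A` of `{1,…,N}` (partitions
all of whose blocks have even cardinality) of `(-1)^(k(A)+1) · ∏_B (|B|-1)!`, where `k(A)` is
the number of blocks, equals `(N-1)‼ · (N-3)‼`. -/
theorem sum_over_two_divisible_partitions (N : ℕ) (hN : Even N) (hN2 : 2 ≤ N) :
    ∑ P ∈ Finset.univ.filter
        (fun P : Finset (Finset (Fin N)) =>
          IsFinsetPartition P ∧ ∀ B ∈ P, Even B.card),
      ((-1 : ℤ) ^ (P.card + 1) * ∏ B ∈ P, (Nat.factorial (B.card - 1) : ℤ)) =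
      (Nat.doubleFactorial (N - 1) : ℤ) * (Nat.doubleFactorial (N - 3) : ℤ) := by
  simp_rw [isFinsetPartition_iff]
  rw [sum_evenPartitions_eq_partitionSum,
    partitionSum_eq_of_recurrence _ _ rfl negSqrtCoeff_succ, card_univ, Fintype.card_fin,
    negSqrtCoeff_of_even hN hN2, Nat.cast_mul]
end

section
/- For any even integer N ≥ 2, the number of permutations (α₁, α₂, …, α_N) of {1,…,N} such that α₁ = 1 and such that there is no odd index r with 1 < r < N for which α_r < α_s for all s > r (i.e., no odd position r > 1 at which α_r is strictly smaller than all subsequent entries), equals (N−1)!!·(N−3)!!. -/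
/-!
Deleting the first entry of a permutation of `{0, …, n}` and renumbering the remaining values
order-preservingly identifies `Perm (Fin (n + 1))` with `Fin (n + 1) × Perm (Fin n)`. Position `0`
is a strict suffix minimum iff `σ 0 = 0`, and every later position is one iff the corresponding
position of the shortened permutation is. So if each position is required to be, required not to be,
or allowed to be a suffix minimum, then at the step where `n + 1` values remain the count is
multiplied by `1`, `n` or `n + 1` respectively. For the pattern of the theorem (first position
forced, odd positions `r > 1` forbidden, even positions free) the factors are
`1, N - 1, N - 3, N - 3, N - 5, N - 5, …, 1, 1`, whose product is `(N - 1)‼ (N - 3)‼`.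
-/

open Equiv Nat

theorem Fin.card_decide_eq_zero_mem {n : ℕ} (S : Finset Bool) :
    Nat.card {p : Fin (n + 1) // decide (p = 0) ∈ S} =
      (if true ∈ S then 1 else 0) + (if false ∈ S then n else 0) := by
  rw [Nat.card_eq_fintype_card, Fintype.card_subtype, Fin.card_filter_univ_succ']
  by_cases h : false ∈ S <;> simp [h, Fin.succ_ne_zero]

namespace Equiv.Perm

variable {n : ℕ}

def IsSuffixMin (σ : Perm (Fin n)) (i : Fin n) : Prop :=
  ∀ j, i < j → σ i < σ j

instance (σ : Perm (Fin n)) : DecidablePred σ.IsSuffixMin := fun _ => by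
  unfold IsSuffixMin; infer_instance

/-- Unlike `Equiv.Perm.decomposeFin`, which uses a swap, this keeps the relative order of the
entries `σ 1, …, σ n`, so that suffix minima are preserved. -/
def tail (σ : Perm (Fin (n + 1))) : Perm (Fin n) :=
  removeNone ((finSuccEquiv n).symm.trans (σ.trans (finSuccEquiv' (σ 0))))

theorem apply_succ_eq_succAbove_tail (σ : Perm (Fin (n + 1))) (x : Fin n) :
    σ x.succ = (σ 0).succAbove (σ.tail x) := by
  obtain ⟨y, hy⟩ := Fin.exists_succAbove_eq (σ.injective.ne (Fin.succ_ne_zero x))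
  have : some (σ.tail x) = some y := by
    rw [tail, removeNone_some _ ⟨y, by simp [← hy]⟩]
    simp [← hy]
  rw [← hy, Option.some_injective _ this]

def consAbove (p : Fin (n + 1)) (τ : Perm (Fin n)) : Perm (Fin (n + 1)) :=
  (finSuccEquiv n).trans (τ.optionCongr.trans (finSuccEquiv' p).symm)

@[simp]
theorem consAbove_apply_zero (p : Fin (n + 1)) (τ : Perm (Fin n)) : consAbove p τ 0 = p := by
  simp [consAbove]

@[simp]
theorem consAbove_apply_succ (p : Fin (n + 1)) (τ : Perm (Fin n)) (x : Fin n) :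
    consAbove p τ x.succ = p.succAbove (τ x) := by
  simp [consAbove]

variable (n) in
def headTailEquiv : Perm (Fin (n + 1)) ≃ Fin (n + 1) × Perm (Fin n) where
  toFun σ := (σ 0, σ.tail)
  invFun x := consAbove x.1 x.2
  left_inv σ := Equiv.ext fun i => by
    cases i using Fin.cases with
    | zero => exact consAbove_apply_zero _ _
    | succ x => exact (consAbove_apply_succ _ _ x).trans (apply_succ_eq_succAbove_tail σ x).symm
  right_inv := by
    rintro ⟨p, τ⟩
    refine Prod.ext (consAbove_apply_zero p τ) (Equiv.ext fun x => ?_)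
    have := apply_succ_eq_succAbove_tail (consAbove p τ) x
    rw [consAbove_apply_succ, consAbove_apply_zero] at this
    exact (Fin.succAbove_right_injective this).symm

theorem isSuffixMin_zero_iff (σ : Perm (Fin (n + 1))) : σ.IsSuffixMin 0 ↔ σ 0 = 0 := by
  refine ⟨fun h => ?_, fun h j hj => ?_⟩
  · by_contra h0
    have hj : σ.symm 0 ≠ 0 := fun hj => h0 (σ.symm_apply_eq.mp hj).symm
    simpa using h _ (Fin.pos_of_ne_zero hj)
  · rw [h]
    exact Fin.pos_of_ne_zero (h ▸ σ.injective.ne hj.ne')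

theorem isSuffixMin_succ_iff (σ : Perm (Fin (n + 1))) (x : Fin n) :
    σ.IsSuffixMin x.succ ↔ σ.tail.IsSuffixMin x := by
  simp [IsSuffixMin, Fin.forall_fin_succ, apply_succ_eq_succAbove_tail]

/-- `S i` is the set of allowed truth values of "position `i` is a strict suffix minimum". -/
def HasSuffixMinPattern (S : ℕ → Finset Bool) (σ : Perm (Fin n)) : Prop :=
  ∀ i : Fin n, decide (σ.IsSuffixMin i) ∈ S i

theorem hasSuffixMinPattern_iff (S : ℕ → Finset Bool) (σ : Perm (Fin (n + 1))) :
    σ.HasSuffixMinPattern S ↔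
      decide (σ 0 = 0) ∈ S 0 ∧ σ.tail.HasSuffixMinPattern (fun i => S (i + 1)) := by
  simp [HasSuffixMinPattern, Fin.forall_fin_succ, isSuffixMin_zero_iff, isSuffixMin_succ_iff]

theorem card_hasSuffixMinPattern_zero (S : ℕ → Finset Bool) :
    Nat.card {σ : Perm (Fin 0) // σ.HasSuffixMinPattern S} = 1 := by
  simp [HasSuffixMinPattern]

theorem card_hasSuffixMinPattern_succ (S : ℕ → Finset Bool) :
    Nat.card {σ : Perm (Fin (n + 1)) // σ.HasSuffixMinPattern S} =
      ((if true ∈ S 0 then 1 else 0) + (if false ∈ S 0 then n else 0)) *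
        Nat.card {τ : Perm (Fin n) // τ.HasSuffixMinPattern (fun i => S (i + 1))} := by
  rw [Nat.card_congr (((headTailEquiv n).subtypeEquiv (hasSuffixMinPattern_iff S)).trans
      (subtypeProdEquivProd (p := fun p => decide (p = 0) ∈ S 0)
        (q := HasSuffixMinPattern fun i => S (i + 1)))),
    Nat.card_prod, Fin.card_decide_eq_zero_mem]

theorem isSuffixMin_iff_forall_one_indexed (σ : Perm (Fin n)) (r : ℕ) (hr1 : 1 ≤ r)
    (hrn : r ≤ n) :
    (∀ s : ℕ, ∀ _ : r < s, ∀ hs : s ≤ n, σ ⟨r - 1, by omega⟩ < σ ⟨s - 1, by omega⟩) ↔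
      σ.IsSuffixMin ⟨r - 1, by omega⟩ := by
  refine ⟨fun h j hj => ?_, fun h s hrs hs => h _ (show r - 1 < s - 1 by omega)⟩
  simpa using h (j + 1) (by simp [Fin.lt_def] at hj; omega) j.isLt

end Equiv.Perm

open Equiv.Perm

/-- Positions are `0`-indexed: the even position `i` is the odd index `r = i + 1` of the paper. -/
def evenNonMinPattern (i : ℕ) : Finset Bool :=
  if Even i then {false} else Finset.univ

theorem card_hasSuffixMinPattern_evenNonMinPattern (k : ℕ) :
    Nat.card {σ : Perm (Fin (2 * k)) // σ.HasSuffixMinPattern evenNonMinPattern} =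
      (2 * k - 1)‼ ^ 2 := by
  induction k with
  | zero => exact card_hasSuffixMinPattern_zero _
  | succ k ih =>
    have hperiodic : (fun i => evenNonMinPattern (i + 1 + 1)) = evenNonMinPattern := by
      funext i
      simp [evenNonMinPattern, Nat.even_add_one]
    rw [show 2 * (k + 1) = 2 * k + 1 + 1 by ring, card_hasSuffixMinPattern_succ,
      card_hasSuffixMinPattern_succ, hperiodic, ih, show 2 * k + 1 + 1 - 1 = 2 * k + 1 by omega,
      doubleFactorial_add_one]
    simp only [evenNonMinPattern, Even.zero, ↓reduceIte, Finset.mem_singleton,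
      Bool.true_eq_false, zero_add, Nat.even_add_one, not_true_eq_false, Fintype.univ_bool,
      Finset.mem_insert, or_false, Bool.false_eq_true, or_true]
    ring

theorem decide_mem_update_evenNonMinPattern_iff {P : Prop} [Decidable P] (i : ℕ) :
    decide P ∈ Function.update evenNonMinPattern 0 {true} i ↔
      (i = 0 → P) ∧ (i ≠ 0 → Even i → ¬P) := by
  unfold evenNonMinPattern
  rcases eq_or_ne i 0 with rfl | hi
  · simp
  · by_cases he : Even i <;> simp [hi, he, em]

theorem fixesZero_and_noOddSuffixMin_iff (k : ℕ) (σ : Perm (Fin (2 * k + 2))) :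
    (σ ⟨0, by omega⟩ = ⟨0, by omega⟩ ∧
      ¬ ∃ r : ℕ, ∃ _ : Odd r, ∃ _ : 1 < r, ∃ hr : r < 2 * k + 2,
        ∀ s : ℕ, ∀ hrs : r < s, ∀ hs : s ≤ 2 * k + 2,
          σ ⟨r - 1, by omega⟩ < σ ⟨s - 1, by omega⟩) ↔
      σ.HasSuffixMinPattern (Function.update evenNonMinPattern 0 {true}) := by
  simp only [HasSuffixMinPattern, decide_mem_update_evenNonMinPattern_iff, forall_and]
  refine and_congr ?_ (not_exists.trans ⟨fun h i hi0 he hmin => ?_,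
    fun h r ⟨hr, hr1, hrn, hmin⟩ => ?_⟩)
  · exact (isSuffixMin_zero_iff σ).symm.trans
      ⟨fun h i hi => (Fin.ext hi : i = 0) ▸ h, fun h => h 0 rfl⟩
  · have hi : (i : ℕ) + 1 < 2 * k + 2 := by
      obtain ⟨t, ht⟩ := he
      omega
    exact h (i + 1) ⟨he.add_one, by omega, hi,
      (isSuffixMin_iff_forall_one_indexed σ (i + 1) (by omega) hi.le).mpr (by simpa using hmin)⟩
  · exact h ⟨r - 1, by omega⟩ (by simp; omega) (Nat.Odd.sub_odd hr odd_one)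
      ((isSuffixMin_iff_forall_one_indexed σ r hr1.le hrn.le).mp hmin)

/-- For any even `N ≥ 2`, the number of permutations `(α₁, …, α_N)` of `{1,…,N}` (here encoded
as permutations `σ` of `Fin N`, with `α_r = σ (r-1) + 1`) such that `α₁ = 1` and such that
there is no odd index `r` with `1 < r < N` for which `α_r < α_s` for all `s > r`, equals
`(N-1)‼ · (N-3)‼`. -/
theorem count_permutations_without_odd_minimal_positions (N : ℕ) (hN : Even N) (hN2 : 2 ≤ N) :
    Nat.card {σ : Equiv.Perm (Fin N) //
      σ ⟨0, by omega⟩ = ⟨0, by omega⟩ ∧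
      ¬ ∃ r : ℕ, ∃ _ : Odd r, ∃ _ : 1 < r, ∃ hr : r < N,
        ∀ s : ℕ, ∀ hrs : r < s, ∀ hs : s ≤ N,
          σ ⟨r - 1, by omega⟩ < σ ⟨s - 1, by omega⟩} =
      Nat.doubleFactorial (N - 1) * Nat.doubleFactorial (N - 3) := by
  obtain ⟨k, rfl⟩ : ∃ k, N = 2 * k + 2 := by
    obtain ⟨m, rfl⟩ := hN
    exact ⟨m - 1, by omega⟩
  have hshift : (fun i => Function.update evenNonMinPattern 0 {true} (i + 1 + 1)) =
      evenNonMinPattern := by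
    funext i
    simp [evenNonMinPattern, Nat.even_add_one]
  rw [Nat.card_congr (subtypeEquivRight (fixesZero_and_noOddSuffixMin_iff k)),
    card_hasSuffixMinPattern_succ, card_hasSuffixMinPattern_succ, hshift,
    card_hasSuffixMinPattern_evenNonMinPattern, show 2 * k + 2 - 1 = 2 * k + 1 by omega,
    show 2 * k + 2 - 3 = 2 * k - 1 by omega, doubleFactorial_add_one]
  simp only [Function.update_self, Finset.mem_singleton, ↓reduceIte, Bool.false_eq_true,
    add_zero, zero_add, ne_eq, one_ne_zero, not_false_eq_true, Function.update_of_ne,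
    evenNonMinPattern, not_even_one, Fintype.univ_bool, Finset.mem_insert, Bool.true_eq_false,
    or_false, or_true, one_mul]
  ring
end
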